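/- arXiv:1401.3932 — 4 statements merged into one kernel-verified Lean document; each statement's English description precedes it below -/
import Mathlib

section
/- The point p_f = (−3/4, 1/2) lies on the fold line {3x² + a = 0} of the nerve impulse model and is a saddle point of the desingularized vector field: the Jacobian of X̄ at p_f has one positive and one negative real eigenvalue. -/
/-!
On the fold line `3x² + a = 0` the first row of the Jacobian loses its `3x² + a` terms; at
`p_f` the Jacobian is `!![1/2, 3/2; 2, 1/2]`, of determinant `-11/4`. A real `2 × 2` matrix with
determinant `δ < 0` has characteristic polynomial `t² - τ t + δ`, whose roots
`(τ ± √(τ² - 4δ))/2` have opposite signs because `√(τ² - 4δ) > |τ|`.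
-/

open Polynomial in
theorem Polynomial.exists_pos_neg_isRoot_X_sq_sub_C_mul_X_add_C {t d : ℝ} (hd : d < 0) :
    ∃ μ₁ μ₂ : ℝ, 0 < μ₁ ∧ μ₂ < 0 ∧
      (X ^ 2 - C t * X + C d).IsRoot μ₁ ∧ (X ^ 2 - C t * X + C d).IsRoot μ₂ := by
  set s := √(t ^ 2 - 4 * d)
  have hs : s ^ 2 = t ^ 2 - 4 * d := Real.sq_sqrt (by nlinarith [sq_nonneg t])
  have ht : |t| < s := abs_lt_of_sq_lt_sq (by linarith) (Real.sqrt_nonneg _)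
  refine ⟨(t + s) / 2, (t - s) / 2, ?_, ?_, ?_, ?_⟩
  · linarith [neg_abs_le t]
  · linarith [le_abs_self t]
  all_goals
    simp only [IsRoot, eval_add, eval_sub, eval_pow, eval_mul, eval_X, eval_C]
    linear_combination hs / 4

open Polynomial in
theorem Module.End.exists_pos_neg_hasEigenvalue_of_det_neg {V : Type*} [AddCommGroup V]
    [Module ℝ V] (hV : Module.finrank ℝ V = 2) {f : Module.End ℝ V} (hf : LinearMap.det f < 0) :
    ∃ μ₁ μ₂ : ℝ, 0 < μ₁ ∧ μ₂ < 0 ∧ f.HasEigenvalue μ₁ ∧ f.HasEigenvalue μ₂ := by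
  have : Module.Finite ℝ V := Module.finite_of_finrank_eq_succ hV
  let b := Module.finBasisOfFinrankEq ℝ V hV
  have hchar : f.charpoly =
      X ^ 2 - C (LinearMap.toMatrix b b f).trace * X + C (LinearMap.det f) := by
    rw [← LinearMap.charpoly_toMatrix f b, Matrix.charpoly_fin_two, LinearMap.det_toMatrix]
  obtain ⟨μ₁, μ₂, h₁, h₂, hr₁, hr₂⟩ := Polynomial.exists_pos_neg_isRoot_X_sq_sub_C_mul_X_add_C
    (t := (LinearMap.toMatrix b b f).trace) hf
  refine ⟨μ₁, μ₂, h₁, h₂, ?_, ?_⟩ <;>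
    rwa [hasEigenvalue_iff_isRoot_charpoly, hchar]

def nerveField (p : ℝ × ℝ) : ℝ × ℝ :=
  (-2 * (3 * p.2 ^ 2 + p.1) * (p.1 + p.2), 1 + p.1 + 2 * (p.1 + p.2) * p.2)

noncomputable def nerveJacobian (p : ℝ × ℝ) : ℝ × ℝ →L[ℝ] ℝ × ℝ :=
  (Matrix.toLin (.finTwoProd ℝ) (.finTwoProd ℝ)
    !![-2 * (3 * p.2 ^ 2 + p.1) - 2 * (p.1 + p.2),
        -12 * p.2 * (p.1 + p.2) - 2 * (3 * p.2 ^ 2 + p.1);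
      1 + 2 * p.2, 2 * p.1 + 4 * p.2]).toContinuousLinearMap

theorem hasFDerivAt_nerveField (p : ℝ × ℝ) : HasFDerivAt nerveField (nerveJacobian p) p := by
  unfold nerveJacobian
  rw [Matrix.toLin_finTwoProd_toContinuousLinearMap]
  have hfst := hasFDerivAt_fst (𝕜 := ℝ) (E := ℝ) (F := ℝ) (p := p)
  have hsnd := hasFDerivAt_snd (𝕜 := ℝ) (E := ℝ) (F := ℝ) (p := p)
  have hsum := hfst.add hsnd
  convert! HasFDerivAt.prodMk
    ((((hsnd.pow 2).const_mul 3).add hfst).const_mul (-2) |>.mul hsum)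
    ((hfst.const_add 1).add ((hsum.const_mul 2).mul hsnd)) using 1
  refine ContinuousLinearMap.ext fun v => Prod.ext ?_ ?_ <;> simp <;> ring

theorem det_nerveJacobian_fold_point :
    LinearMap.det (nerveJacobian (-3 / 4, 1 / 2) : Module.End ℝ (ℝ × ℝ)) = -11 / 4 := by
  rw [nerveJacobian, LinearMap.coe_toContinuousLinearMap, LinearMap.det_toLin,
    Matrix.det_fin_two_of]
  norm_num

/-- The point `p_f = (−3/4, 1/2)` lies on the fold line `{3x² + a = 0}` and is a saddle
point of the desingularized vector field of the nerve impulse model: the Jacobian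
(`fderiv`) of `X̄` at `p_f` has one positive and one negative real eigenvalue. -/
theorem nerve_impulse_folded_saddle
    (Xbar : ℝ × ℝ → ℝ × ℝ)
    (hX : Xbar = fun p => (-2 * (3 * p.2 ^ 2 + p.1) * (p.1 + p.2),
        1 + p.1 + 2 * (p.1 + p.2) * p.2)) :
    3 * (1/2 : ℝ) ^ 2 + (-3/4 : ℝ) = 0 ∧
    ∃ lam₁ lam₂ : ℝ, 0 < lam₁ ∧ lam₂ < 0 ∧
      Module.End.HasEigenvalue ((fderiv ℝ Xbar ((-3/4 : ℝ), (1/2 : ℝ))).toLinearMap) lam₁ ∧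
      Module.End.HasEigenvalue ((fderiv ℝ Xbar ((-3/4 : ℝ), (1/2 : ℝ))).toLinearMap) lam₂ := by
  have hfderiv : fderiv ℝ Xbar (-3 / 4, 1 / 2) = nerveJacobian (-3 / 4, 1 / 2) :=
    hX ▸ (hasFDerivAt_nerveField _).fderiv
  refine ⟨by norm_num, ?_⟩
  rw [hfderiv]
  exact Module.End.exists_pos_neg_hasEigenvalue_of_det_neg (by simp)
    (by rw [det_nerveJacobian_fold_point]; norm_num)
end

section
/- For the swallowtail constrained equation, if (x,a,b,c) ∈ B (i.e., x⁴ + ax² + bx + c = 0 and 4x³ + 2ax + b = 0), and a < 0 with x² < −a/2, then the point (−x − √(−2x² − a), a, b, c) also lies in the constraint manifold S_V; i.e., the finite jump (x,a,b,c) ↦ (−x − √(−2x²−a), a, b, c) lands on S_V. -/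
/-! A point of `B` is a double root `x` of the quartic `t ↦ t⁴ + at² + bt + c`, so the quartic
factors as `(t - x)² (t² + 2xt + 3x² + a)`. The quadratic factor has the roots
`-x ± √(-2x² - a)`, real exactly when `x² ≤ -a/2`; the finite jump moves to one of them. -/

theorem quartic_eq_sq_mul_of_double_root {x a b c : ℝ}
    (h1 : x^4 + a*x^2 + b*x + c = 0) (h2 : 4*x^3 + 2*a*x + b = 0) (t : ℝ) :
    t^4 + a*t^2 + b*t + c = (t - x)^2 * (t^2 + 2*x*t + 3*x^2 + a) := by
  linear_combination h1 + (t - x) * h2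

theorem cofactor_eq_zero_of_sq_eq {x a s : ℝ} (hs : s^2 = -2*x^2 - a) :
    (-x - s)^2 + 2*x*(-x - s) + 3*x^2 + a = 0 := by
  linear_combination hs

theorem swallowtail_finite_jump_general (x a b c : ℝ)
    (h1 : x^4 + a*x^2 + b*x + c = 0)
    (h2 : 4*x^3 + 2*a*x + b = 0)
    (hx : x^2 < -a/2) :
    (-x - Real.sqrt (-2*x^2 - a))^4 + a*(-x - Real.sqrt (-2*x^2 - a))^2 +
      b*(-x - Real.sqrt (-2*x^2 - a)) + c = 0 := by
  have hs : Real.sqrt (-2*x^2 - a) ^ 2 = -2*x^2 - a := Real.sq_sqrt (by linarith)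
  rw [quartic_eq_sq_mul_of_double_root h1 h2, cofactor_eq_zero_of_sq_eq hs, mul_zero]

/-- For the swallowtail constrained equation, if `(x,a,b,c) ∈ B` and `a < 0` with
`x² < −a/2`, then the finite jump target `(−x − √(−2x² − a), a, b, c)` lies on `S_V`. -/
theorem swallowtail_finite_jump (x a b c : ℝ)
    (h1 : x^4 + a*x^2 + b*x + c = 0)
    (h2 : 4*x^3 + 2*a*x + b = 0)
    (ha : a < 0) (hx : x^2 < -a/2) :
    (-x - Real.sqrt (-2*x^2 - a))^4 + a*(-x - Real.sqrt (-2*x^2 - a))^2 +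
      b*(-x - Real.sqrt (-2*x^2 - a)) + c = 0 :=
  swallowtail_finite_jump_general x a b c h1 h2 hx
end

section
/- For the hyperbolic umbilic with a₂ ≠ 0, the quartic equation in x₁ obtained by eliminating y₁ from the projection equations −3x₁² − a₂y₁ = −3x₂² − a₂y₂ and −3y₁² − a₂x₁ = −3y₂² − a₂x₂ factors as (x₁ − x₂)²(3x₁² + 6x₂x₁ + 3x₂² − 2a₂y₂) = 0. -/
theorem hyperbolic_umbilic_quartic_factorization_general (x₂ y₂ a₂ : ℝ)
    (hB : a₂^2 = 36*x₂*y₂) (x₁ : ℝ) :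
    27*x₁^4 - (54*x₂^2 + 18*a₂*y₂)*x₁^2 + a₂^3*x₁ + 18*x₂^2*a₂*y₂ - a₂^3*x₂ + 27*x₂^4 =
      9 * (x₁ - x₂)^2 * (3*x₁^2 + 6*x₂*x₁ + 3*x₂^2 - 2*a₂*y₂) := by
  linear_combination (x₁ - x₂) * a₂ * hB

/-- Hyperbolic umbilic, `a₂ ≠ 0` (with `(x₂,y₂,a₂)` a singular point, `a₂² = 36x₂y₂`):
the quartic obtained by eliminating `y₁` from the projection equations factors as
`(x₁ − x₂)²(3x₁² + 6x₂x₁ + 3x₂² − 2a₂y₂) = 0` (up to the constant factor 9). -/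
theorem hyperbolic_umbilic_quartic_factorization (x₂ y₂ a₂ : ℝ)
    (ha : a₂ ≠ 0) (hB : a₂^2 = 36*x₂*y₂) (x₁ : ℝ) :
    27*x₁^4 - (54*x₂^2 + 18*a₂*y₂)*x₁^2 + a₂^3*x₁ + 18*x₂^2*a₂*y₂ - a₂^3*x₂ + 27*x₂^4 =
      9 * (x₁ - x₂)^2 * (3*x₁^2 + 6*x₂*x₁ + 3*x₂^2 - 2*a₂*y₂) :=
  hyperbolic_umbilic_quartic_factorization_general x₂ y₂ a₂ hB x₁
end

section
/- The Jacobian at the origin of the desingularized vector field of the hyperbolic umbilic, X̄ = (36xy − a²)f_a ∂_a + ((−6y² + ax)f_a − 6y f_b + a f_c) ∂_x + ((−6x² + ay)f_a + a f_b − 6x f_c) ∂_y, with smooth functions f_a, f_b, f_c satisfying f_b(0) f_c(0) > 0, has eigenvalues {0, 6√(f_b(0)f_c(0)), −6√(f_b(0)f_c(0))}. -/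
set_option maxHeartbeats 4000000 in
/-- The Jacobian at the origin of the desingularized vector field of the hyperbolic
umbilic (coordinates `(a,x,y)`), with smooth `f_a, f_b, f_c` satisfying
`f_b(0)·f_c(0) > 0`, has (real) eigenvalues exactly
`{0, 6√(f_b(0)f_c(0)), −6√(f_b(0)f_c(0))}`. -/
theorem hyperbolic_umbilic_jacobian_eigenvalues
    (fa fb fc : ℝ × ℝ × ℝ → ℝ)
    (hfa : ContDiff ℝ (⊤ : ℕ∞) fa) (hfb : ContDiff ℝ (⊤ : ℕ∞) fb) (hfc : ContDiff ℝ (⊤ : ℕ∞) fc)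
    (hpos : fb (0,0,0) * fc (0,0,0) > 0)
    (F : ℝ × ℝ × ℝ → ℝ × ℝ × ℝ)
    (hF : F = fun p => ((36*p.2.1*p.2.2 - p.1^2) * fa p,
        (-6*p.2.2^2 + p.1*p.2.1) * fa p - 6*p.2.2 * fb p + p.1 * fc p,
        (-6*p.2.1^2 + p.1*p.2.2) * fa p + p.1 * fb p - 6*p.2.1 * fc p)) :
    ∀ μ : ℝ,
      Module.End.HasEigenvalue ((fderiv ℝ F (0,0,0)).toLinearMap) μ ↔
        (μ = 0 ∨ μ = 6*Real.sqrt (fb (0,0,0) * fc (0,0,0)) ∨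
          μ = -(6*Real.sqrt (fb (0,0,0) * fc (0,0,0)))) := by
  set b := fb (0,0,0) with hb
  set c := fc (0,0,0) with hc
  set e1 : (ℝ×ℝ×ℝ) →L[ℝ] ℝ := ContinuousLinearMap.fst ℝ ℝ (ℝ×ℝ) with he1
  set e2 : (ℝ×ℝ×ℝ) →L[ℝ] ℝ :=
    (ContinuousLinearMap.fst ℝ ℝ ℝ).comp (ContinuousLinearMap.snd ℝ ℝ (ℝ×ℝ)) with he2
  set e3 : (ℝ×ℝ×ℝ) →L[ℝ] ℝ :=
    (ContinuousLinearMap.snd ℝ ℝ ℝ).comp (ContinuousLinearMap.snd ℝ ℝ (ℝ×ℝ)) with he3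
  have hfa' := (hfa.differentiable (by simp) (0,0,0)).hasFDerivAt
  have hfb' := (hfb.differentiable (by simp) (0,0,0)).hasFDerivAt
  have hfc' := (hfc.differentiable (by simp) (0,0,0)).hasFDerivAt
  have h1 : HasFDerivAt (fun p : ℝ×ℝ×ℝ => p.1) e1 ((0,0,0):ℝ×ℝ×ℝ) := hasFDerivAt_fst
  have h2 : HasFDerivAt (fun p : ℝ×ℝ×ℝ => p.2.1) e2 ((0,0,0):ℝ×ℝ×ℝ) :=
    hasFDerivAt_fst.comp _ hasFDerivAt_snd
  have h3 : HasFDerivAt (fun p : ℝ×ℝ×ℝ => p.2.2) e3 ((0,0,0):ℝ×ℝ×ℝ) :=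
    hasFDerivAt_snd.comp _ hasFDerivAt_snd
  have h1sq : HasFDerivAt (fun p : ℝ×ℝ×ℝ => p.1^2)
      (((0,0,0):ℝ×ℝ×ℝ).1 • e1 + ((0,0,0):ℝ×ℝ×ℝ).1 • e1) ((0,0,0):ℝ×ℝ×ℝ) := by
    rw [show (fun p : ℝ×ℝ×ℝ => p.1^2) = fun p => p.1 * p.1 from funext fun p => pow_two _]
    exact h1.mul h1
  have h2sq : HasFDerivAt (fun p : ℝ×ℝ×ℝ => p.2.1^2)
      (((0,0,0):ℝ×ℝ×ℝ).2.1 • e2 + ((0,0,0):ℝ×ℝ×ℝ).2.1 • e2) ((0,0,0):ℝ×ℝ×ℝ) := by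
    rw [show (fun p : ℝ×ℝ×ℝ => p.2.1^2) = fun p => p.2.1 * p.2.1 from funext fun p => pow_two _]
    exact h2.mul h2
  have h3sq : HasFDerivAt (fun p : ℝ×ℝ×ℝ => p.2.2^2)
      (((0,0,0):ℝ×ℝ×ℝ).2.2 • e3 + ((0,0,0):ℝ×ℝ×ℝ).2.2 • e3) ((0,0,0):ℝ×ℝ×ℝ) := by
    rw [show (fun p : ℝ×ℝ×ℝ => p.2.2^2) = fun p => p.2.2 * p.2.2 from funext fun p => pow_two _]
    exact h3.mul h3
  have hA : HasFDerivAt (fun p : ℝ×ℝ×ℝ => (36*p.2.1*p.2.2 - p.1^2) * fa p)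
      (0 : (ℝ×ℝ×ℝ) →L[ℝ] ℝ) ((0,0,0):ℝ×ℝ×ℝ) := by
    refine HasFDerivAt.congr_fderiv
      (((((hasFDerivAt_const (36:ℝ) _).mul h2).mul h3).sub h1sq).mul hfa') ?_
    refine ContinuousLinearMap.ext fun v => ?_
    simp
  have hB : HasFDerivAt (fun p : ℝ×ℝ×ℝ =>
      (-6*p.2.2^2 + p.1*p.2.1) * fa p - 6*p.2.2 * fb p + p.1 * fc p)
      (c • e1 - (6*b) • e3) ((0,0,0):ℝ×ℝ×ℝ) := by
    refine HasFDerivAt.congr_fderiv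
      ((((((hasFDerivAt_const (-6:ℝ) _).mul h3sq).add (h1.mul h2)).mul hfa').sub
        (((hasFDerivAt_const (6:ℝ) _).mul h3).mul hfb')).add (h1.mul hfc')) ?_
    refine ContinuousLinearMap.ext fun v => ?_
    simp [he1, he2, he3, hb, hc]
    ring
  have hC : HasFDerivAt (fun p : ℝ×ℝ×ℝ =>
      (-6*p.2.1^2 + p.1*p.2.2) * fa p + p.1 * fb p - 6*p.2.1 * fc p)
      (b • e1 - (6*c) • e2) ((0,0,0):ℝ×ℝ×ℝ) := by
    refine HasFDerivAt.congr_fderiv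
      ((((((hasFDerivAt_const (-6:ℝ) _).mul h2sq).add (h1.mul h3)).mul hfa').add
        (h1.mul hfb')).sub (((hasFDerivAt_const (6:ℝ) _).mul h2).mul hfc')) ?_
    refine ContinuousLinearMap.ext fun v => ?_
    simp [he1, he2, he3, hb, hc]
    ring
  set L : (ℝ×ℝ×ℝ) →L[ℝ] (ℝ×ℝ×ℝ) :=
    (0 : (ℝ×ℝ×ℝ) →L[ℝ] ℝ).prod ((c • e1 - (6*b) • e3).prod (b • e1 - (6*c) • e2)) with hL
  have hLapp : ∀ v : ℝ×ℝ×ℝ, L v = (0, c*v.1 - 6*b*v.2.2, b*v.1 - 6*c*v.2.1) := by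
    intro v
    simp [hL, he1, he2, he3, ContinuousLinearMap.prod_apply, mul_assoc]
  have key : HasFDerivAt F L ((0,0,0):ℝ×ℝ×ℝ) := by
    rw [hF, hL]
    exact hA.prodMk (hB.prodMk hC)
  have hfd : (fderiv ℝ F ((0,0,0):ℝ×ℝ×ℝ)) = L := key.fderiv
  rw [hfd]
  have hbne : b ≠ 0 := by rintro h; rw [h] at hpos; simp at hpos
  have hcne : c ≠ 0 := by rintro h; rw [h] at hpos; simp at hpos
  set s : ℝ := 6 * Real.sqrt (b*c) with hs
  have hs2 : s * s = 36 * (b*c) := by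
    have := Real.mul_self_sqrt hpos.le
    rw [hs]; nlinarith
  have hspos : 0 < s := by
    have := Real.sqrt_pos.mpr hpos
    positivity
  intro μ
  constructor
  · intro h
    obtain ⟨v, hv⟩ := h.exists_hasEigenvector
    obtain ⟨hvmem, hvne⟩ := hv
    rw [Module.End.mem_eigenspace_iff] at hvmem
    have hEv : L v = μ • v := hvmem
    rw [hLapp] at hEv
    obtain ⟨p, q, r⟩ := v
    simp [Prod.ext_iff, Prod.smul_def, smul_eq_mul] at hEv
    obtain ⟨h01, h02, h03⟩ := hEv
    by_cases hμ : μ = 0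
    · exact Or.inl hμ
    · have hp : p = 0 := h01.resolve_left hμ
      subst hp
      have e2' : -(6*b*r) = μ * q := by rw [← h02]; ring
      have e3' : -(6*c*q) = μ * r := by rw [← h03]; ring
      have hqne : q ≠ 0 := by
        rintro rfl
        have h6br : 6*b*r = 0 := by linarith [e2']
        have hr0 : r = 0 := by
          rcases mul_eq_zero.mp h6br with h | h
          · rcases mul_eq_zero.mp h with h | h
            · norm_num at h
            · exact absurd h hbne
          · exact h
        exact hvne (by simp [hr0])
      have hμ2 : μ * μ = 36 * (b*c) := by
        have hmm : μ * (μ * q) = 36*(b*c) * q := by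
          rw [← e2', show μ * -(6*b*r) = -(6*b*(μ*r)) from by ring, ← e3']
          ring
        have h' : (μ * μ - 36*(b*c)) * q = 0 := by linear_combination hmm
        rcases mul_eq_zero.mp h' with h | h
        · linarith [h]
        · exact absurd h hqne
      have hss : μ * μ = s * s := by rw [hs2, hμ2]
      rcases mul_self_eq_mul_self_iff.mp hss with h | h
      · exact Or.inr (Or.inl h)
      · exact Or.inr (Or.inr h)
  · rintro (rfl | rfl | rfl)
    · have hmem : L (6*b*c, b^2, c^2) = (0:ℝ) • ((6*b*c, b^2, c^2) : ℝ×ℝ×ℝ) := by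
        rw [hLapp]
        simp [Prod.ext_iff]
        constructor <;> ring
      have hne : ((6*b*c, b^2, c^2) : ℝ×ℝ×ℝ) ≠ 0 := by
        intro h
        have h2 : b^2 = (0:ℝ) := congrArg (fun v : ℝ×ℝ×ℝ => v.2.1) h
        exact hbne (pow_eq_zero_iff two_ne_zero |>.mp h2)
      exact Module.End.hasEigenvalue_of_hasEigenvector
        ⟨Module.End.mem_eigenspace_iff.mpr hmem, hne⟩
    · have hmem : L (0, s, -(6*c)) = s • ((0, s, -(6*c)) : ℝ×ℝ×ℝ) := by
        rw [hLapp]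
        refine Prod.ext (by simp) (Prod.ext ?_ ?_)
        · show c * 0 - 6*b*(-(6*c)) = s * s
          rw [hs2]; ring
        · show b * 0 - 6*c*s = s * (-(6*c))
          ring
      have hne : ((0, s, -(6*c)) : ℝ×ℝ×ℝ) ≠ 0 := by
        intro h
        have h2 : s = (0:ℝ) := congrArg (fun v : ℝ×ℝ×ℝ => v.2.1) h
        exact absurd h2 (ne_of_gt hspos)
      exact Module.End.hasEigenvalue_of_hasEigenvector
        ⟨Module.End.mem_eigenspace_iff.mpr hmem, hne⟩
    · have hmem : L (0, s, 6*c) = (-s) • ((0, s, 6*c) : ℝ×ℝ×ℝ) := by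
        rw [hLapp]
        refine Prod.ext (by simp) (Prod.ext ?_ ?_)
        · show c * 0 - 6*b*(6*c) = -s * s
          nlinarith [hs2]
        · show b * 0 - 6*c*s = -s * (6*c)
          ring
      have hne : ((0, s, 6*c) : ℝ×ℝ×ℝ) ≠ 0 := by
        intro h
        have h2 : s = (0:ℝ) := congrArg (fun v : ℝ×ℝ×ℝ => v.2.1) h
        exact absurd h2 (ne_of_gt hspos)
      exact Module.End.hasEigenvalue_of_hasEigenvector
        ⟨Module.End.mem_eigenspace_iff.mpr hmem, hne⟩
end
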